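/- arXiv:1210.3075 — 6 statements merged into one kernel-verified Lean document; each statement's English description precedes it below -/
import Mathlib

section
/- If a binary n×k matrix M (n ≥ k) has the assignment property, then every column of M contains at most k−1 zero entries; equivalently, each column contains at least n−k+1 ones. -/
/-- Assignment property of a binary n×k matrix (entries in Bool): for every
choice of k distinct rows there is a system of distinct column indices with
ones at the corresponding positions. -/
def AssignProp {n k : ℕ} (M : Fin n → Fin k → Bool) : Prop :=
  ∀ σ : Fin k → Fin n, Function.Injective σ →
    ∃ π : Equiv.Perm (Fin k), ∀ t : Fin k, M (σ t) (π t) = true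

namespace AssignProp

variable {n k : ℕ} {M : Fin n → Fin k → Bool}

theorem exists_apply_eq_true (hM : AssignProp M) {σ : Fin k → Fin n}
    (hσ : Function.Injective σ) (j : Fin k) : ∃ t, M (σ t) j = true :=
  let ⟨π, hπ⟩ := hM σ hσ
  ⟨π.symm j, by simpa using hπ (π.symm j)⟩

theorem card_lt_of_forall_eq_false (hM : AssignProp M) {j : Fin k} {s : Finset (Fin n)}
    (hs : ∀ i ∈ s, M i j = false) : s.card < k := by
  by_contra! hks
  obtain ⟨e⟩ : Nonempty (Fin k ↪ s) :=
    Function.Embedding.nonempty_of_card_le (by simpa using hks)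
  obtain ⟨t, ht⟩ :=
    hM.exists_apply_eq_true (Subtype.val_injective.comp e.injective) j
  simp [hs _ (e t).2] at ht

end AssignProp

theorem assign_column_zeros {n k : ℕ} (hnk : k ≤ n) (M : Fin n → Fin k → Bool)
    (hM : AssignProp M) (j : Fin k) :
    (Finset.univ.filter (fun i : Fin n => M i j = false)).card ≤ k - 1 ∧
      n - k + 1 ≤ (Finset.univ.filter (fun i : Fin n => M i j = true)).card := by
  have hzeros : (Finset.univ.filter (fun i : Fin n => M i j = false)).card < k :=
    hM.card_lt_of_forall_eq_false fun i hi => (Finset.mem_filter.mp hi).2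
  have hsplit := Finset.univ.card_filter_add_card_filter_not (fun i : Fin n => M i j = true)
  simp only [Bool.not_eq_true, Finset.card_univ, Fintype.card_fin] at hsplit
  omega
end

section
/- If a binary n×k matrix M (n ≥ k) has the assignment property, then the total number N of entries equal to 1 in M satisfies N ≥ k(n−k+1). -/
open Finset

theorem card_filter_prod_eq_sum_card_filter {α β : Type*} [Fintype α] [Fintype β]
    (p : α → β → Prop) [∀ a b, Decidable (p a b)] :
    #{x : α × β | p x.1 x.2} = ∑ b, #{a | p a b} := by
  simp only [card_filter, Fintype.sum_prod_type]
  exact sum_comm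

namespace AssignProp

variable {n k : ℕ} {M : Fin n → Fin k → Bool}

/-- Any `k` rows vanishing in column `j` would violate the assignment property: whichever of
them is matched to `j` sees a zero there. -/
theorem card_col_zeros_lt (hM : AssignProp M) (j : Fin k) : #{i | M i j = false} < k := by
  by_contra! h
  obtain ⟨T, hTzero, hTcard⟩ := exists_subset_card_eq h
  let σ := T.orderEmbOfFin hTcard
  obtain ⟨π, hπ⟩ := hM σ σ.injective
  have hzero := (mem_filter.1 (hTzero (T.orderEmbOfFin_mem hTcard (π.symm j)))).2
  have hone := hπ (π.symm j)
  rw [π.apply_symm_apply, hzero] at hone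
  exact Bool.false_ne_true hone

theorem le_card_col_ones (hnk : k ≤ n) (hM : AssignProp M) (j : Fin k) :
    n - k + 1 ≤ #{i | M i j = true} := by
  have hcard := card_filter_add_card_filter_not (s := univ) (fun i => M i j = true)
  simp only [Bool.not_eq_true, card_univ, Fintype.card_fin] at hcard
  have := hM.card_col_zeros_lt j
  omega

end AssignProp

theorem assign_total_ones {n k : ℕ} (hnk : k ≤ n) (M : Fin n → Fin k → Bool)
    (hM : AssignProp M) :
    k * (n - k + 1) ≤
      (Finset.univ.filter (fun p : Fin n × Fin k => M p.1 p.2 = true)).card := by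
  calc k * (n - k + 1) = ∑ _j : Fin k, (n - k + 1) := by simp
    _ ≤ ∑ j, #{i | M i j = true} := sum_le_sum fun j _ => hM.le_card_col_ones hnk j
    _ = _ := (card_filter_prod_eq_sum_card_filter (fun i j => M i j = true)).symm
end

section
/- Let k ≥ 3 be odd, l = (k+1)/2, n = 2k, and let M be the l-banded matrix: its rows are indexed by i ∈ {0,…,2k−1}, and M_{i,j} = 1 if and only if (j − i) mod k < l. Then M has the assignment property. -/
/-- The l-banded 2k×k matrix: entry (i,j) is 1 iff (j - i) mod k < l. -/
def banded (k l : ℕ) (i : Fin (2*k)) (j : Fin k) : Bool :=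
  decide ((((j : ℕ) : ℤ) - ((i : ℕ) : ℤ)) % (k : ℤ) < (l : ℤ))

open Finset Pointwise

def arc (k l : ℕ) [NeZero k] : Finset (ZMod k) := {x | x.val < l}

section

variable {k : ℕ} [NeZero k]

lemma mem_arc {l : ℕ} {x : ZMod k} : x ∈ arc k l ↔ x.val < l := by
  simp [arc]

lemma zero_mem_arc {l : ℕ} (hl : 0 < l) : (0 : ZMod k) ∈ arc k l := by
  simpa [mem_arc] using hl

lemma arc_mono {l l' : ℕ} (h : l ≤ l') : arc k l ⊆ arc k l' :=
  fun _ ha => mem_arc.2 <| (mem_arc.1 ha).trans_le h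

lemma add_one_mem_arc {l : ℕ} {a : ZMod k} (ha : a ∈ arc k l) : a + 1 ∈ arc k (l + 1) := by
  have hone : (1 : ZMod k).val ≤ 1 := (ZMod.val_one_eq_one_mod k).trans_le (Nat.mod_le 1 k)
  exact mem_arc.2 <| (ZMod.val_add_le a 1).trans_lt (Nat.add_lt_add_of_lt_of_le (mem_arc.1 ha) hone)

lemma ZMod.eq_univ_of_add_one_mem {X : Finset (ZMod k)} (hne : X.Nonempty)
    (hX : ∀ x ∈ X, x + 1 ∈ X) : X = univ := by
  obtain ⟨x₀, hx₀⟩ := hne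
  have hshift : ∀ n : ℕ, x₀ + n ∈ X := by
    intro n
    induction n with
    | zero => simpa using hx₀
    | succ n ih => simpa [add_assoc] using hX _ ih
  refine eq_univ_of_forall fun y => ?_
  simpa using hshift (y - x₀).val

lemma min_card_add_one_le_card_union_image_add_one {Y : Finset (ZMod k)} (hY : Y.Nonempty) :
    min k (#Y + 1) ≤ #(Y ∪ Y.image (· + 1)) := by
  by_cases h : Y.image (· + 1) ⊆ Y
  · rw [ZMod.eq_univ_of_add_one_mem hY fun y hy => h (mem_image_of_mem _ hy)]
    simp [ZMod.card]
  · have hlt : Y ⊂ Y ∪ Y.image (· + 1) :=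
      (ssubset_iff_of_subset subset_union_left).2 <| by
        obtain ⟨z, hz, hzY⟩ := not_subset.1 h
        exact ⟨z, mem_union_right _ hz, hzY⟩
    exact (min_le_right _ _).trans (card_lt_card hlt)

lemma min_card_add_le_card_add_arc {X : Finset (ZMod k)} (hX : X.Nonempty) (m : ℕ) :
    min k (#X + m) ≤ #(X + arc k (m + 1)) := by
  induction m with
  | zero => exact (min_le_right _ _).trans (card_le_card (subset_add_left X (zero_mem_arc one_pos)))
  | succ m ih =>
    have hsub : (X + arc k (m + 1)) ∪ (X + arc k (m + 1)).image (· + 1) ⊆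
        X + arc k (m + 1 + 1) := by
      refine union_subset (add_subset_add_left (arc_mono (m + 1).le_succ)) fun z hz => ?_
      obtain ⟨y, hy, rfl⟩ := mem_image.1 hz
      obtain ⟨x, hx, a, ha, rfl⟩ := mem_add.1 hy
      exact mem_add.2 ⟨x, hx, a + 1, add_one_mem_arc ha, (add_assoc x a 1).symm⟩
    have hYk : #(X + arc k (m + 1)) ≤ k := card_le_univ _ |>.trans (ZMod.card k).le
    have hstep := min_card_add_one_le_card_union_image_add_one
      (hX.add ⟨0, zero_mem_arc (l := m + 1) (by omega)⟩)
    have hgrow := card_le_card hsub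
    omega

lemma card_le_mul_card_image_natCast {m : ℕ} (T : Finset (Fin (m * k))) :
    #T ≤ m * #(T.image fun i : Fin (m * k) => ((i : ℕ) : ZMod k)) := by
  refine card_le_mul_card_image T m fun b _ => ?_
  have hquot : ∀ i ∈ T.filter (fun i : Fin (m * k) => ((i : ℕ) : ZMod k) = b),
      (i : ℕ) / k ∈ range m :=
    fun i _ => mem_range.2 <| (Nat.div_lt_iff_lt_mul (Nat.pos_of_neZero k)).2 i.isLt
  refine (card_le_card_of_injOn _ hquot fun i hi i' hi' hdiv => ?_).trans (card_range m).le
  have hmod : (i : ℕ) % k = (i' : ℕ) % k := by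
    rw [← ZMod.natCast_eq_natCast_iff', (mem_filter.1 hi).2, (mem_filter.1 hi').2]
  exact Fin.ext <| by rw [← Nat.div_add_mod i k, ← Nat.div_add_mod i' k, hdiv, hmod]

lemma banded_eq_true_iff {l : ℕ} (i : Fin (2 * k)) (j : Fin k) :
    banded k l i j = true ↔ ((j : ℕ) : ZMod k) - ((i : ℕ) : ZMod k) ∈ arc k l := by
  have hcast : ((j : ℕ) : ZMod k) - ((i : ℕ) : ZMod k) =
      ((((j : ℕ) : ℤ) - (i : ℕ) : ℤ) : ZMod k) := by
    push_cast; ring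
  rw [banded, decide_eq_true_eq, mem_arc, hcast, ← Nat.cast_lt (α := ℤ), ZMod.val_intCast]

end

lemma AssignProp.of_forall_card_le_card_biUnion {n k : ℕ} {M : Fin n → Fin k → Bool}
    (hM : ∀ σ : Fin k → Fin n, Function.Injective σ →
      ∀ s : Finset (Fin k), #s ≤ #(s.biUnion fun t => {j | M (σ t) j = true})) :
    AssignProp M := by
  intro σ hσ
  obtain ⟨f, hf, hfM⟩ :=
    (all_card_le_biUnion_card_iff_exists_injective fun t => {j | M (σ t) j = true}).1 (hM σ hσ)
  exact ⟨Equiv.ofBijective f (Finite.injective_iff_bijective.1 hf),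
    fun t => (mem_filter.1 (hfM t)).2⟩

lemma card_le_card_biUnion_banded {k l : ℕ} [NeZero k] (hkl : k < 2 * l)
    {σ : Fin k → Fin (2 * k)} (hσ : Function.Injective σ) (s : Finset (Fin k)) :
    #s ≤ #(s.biUnion fun t => {j | banded k l (σ t) j = true}) := by
  rcases s.eq_empty_or_nonempty with rfl | hs
  · simp
  set R := (s.image σ).image fun i : Fin (2 * k) => ((i : ℕ) : ZMod k)
  have hsR : #s ≤ 2 * #R := by
    simpa [card_image_of_injective s hσ] using card_le_mul_card_image_natCast (s.image σ)
  have hcols : #(R + arc k l) ≤ #(s.biUnion fun t => {j | banded k l (σ t) j = true}) := by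
    refine card_le_card_of_surjOn (fun j : Fin k => ((j : ℕ) : ZMod k)) fun y hy => ?_
    obtain ⟨_, hr, a, ha, rfl⟩ := mem_add.1 hy
    obtain ⟨_, hi, rfl⟩ := mem_image.1 hr
    obtain ⟨t, ht, rfl⟩ := mem_image.1 hi
    refine ⟨⟨(_ + a).val, ZMod.val_lt _⟩, ?_, ZMod.natCast_zmod_val _⟩
    rw [mem_coe, mem_biUnion]
    refine ⟨t, ht, mem_filter.2 ⟨mem_univ _, (banded_eq_true_iff (k := k) _ _).2 ?_⟩⟩
    simpa [ZMod.natCast_zmod_val] using ha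
  have hR : min k (#R + (l - 1)) ≤ #(R + arc k l) := by
    simpa [show l - 1 + 1 = l by omega] using
      min_card_add_le_card_add_arc ((hs.image σ).image _) (l - 1)
  have hsk : #s ≤ k := card_le_univ s |>.trans (Fintype.card_fin k).le
  omega

theorem banded_assignProp {k l : ℕ} [NeZero k] (hkl : k < 2 * l) : AssignProp (banded k l) :=
  AssignProp.of_forall_card_le_card_biUnion fun _ hσ => card_le_card_biUnion_banded hkl hσ

theorem banded_assign_general {k : ℕ} (hodd : Odd k) :
    AssignProp (banded k ((k + 1) / 2)) := by
  obtain ⟨c, rfl⟩ := hodd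
  exact banded_assignProp (by omega)

theorem banded_assign {k : ℕ} (hk : 3 ≤ k) (hodd : Odd k) :
    AssignProp (banded k ((k + 1) / 2)) :=
  banded_assign_general hodd
end

section
/- Let k ≥ 3 be odd, l = (k+1)/2, and let M be the 2k×k l-banded matrix defined by M_{i,j} = 1 iff (j − i) mod k < l. For any m ≤ k distinct rows of M, if the submatrix A formed by these rows has some null columns (columns with all entries 0), then the set of null columns of A is an interval of consecutive columns in the cyclic order on {0,…,k−1}. -/
/-!
Row `i` of the `l`-banded matrix vanishes exactly on the `k - l` columns cyclically preceding `i`.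
Fix a row `i₀ ∈ I` and parametrize its zero run by `s ∈ [0, k - l)`. Since `k - l ≤ l`, the zero
run of any other row meets this window in a prefix or a suffix, so the null columns are a segment
of the window.
-/

lemma le_emod_iff_of_lt_two_mul {k l u : ℤ} (hu₀ : 0 ≤ u) (hu : u < 2 * k) :
    l ≤ u % k ↔ l ≤ u ∧ u < k ∨ k + l ≤ u := by
  rcases lt_or_ge u k with h | h
  · rw [Int.emod_eq_of_lt hu₀ h]; omega
  · rw [← Int.sub_emod_right, Int.emod_eq_of_lt (by omega) (by omega)]; omega

/-- `l ≤ (a + s) % k` cuts a prefix or a suffix out of `s ∈ [0, k - l)`: this window and the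
run of `s` where it holds are both too short (`k - l ≤ l`) to overlap at both ends. -/
lemma le_emod_of_le_of_le {k l a s₁ s₂ s₃ : ℤ} (hkl : k ≤ 2 * l) (h₁ : 0 ≤ s₁)
    (h₁₂ : s₁ ≤ s₂) (h₂₃ : s₂ ≤ s₃) (h₃ : s₃ < k - l)
    (hs₁ : l ≤ (a + s₁) % k) (hs₃ : l ≤ (a + s₃) % k) : l ≤ (a + s₂) % k := by
  have hk : 0 < k := by omega
  have hred (s : ℤ) : (a + s) % k = (a % k + s) % k := by rw [Int.emod_add_emod]
  have ha₀ := Int.emod_nonneg a hk.ne'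
  have ha₁ := Int.emod_lt_of_pos a hk
  rw [hred, le_emod_iff_of_lt_two_mul (by omega) (by omega)] at hs₁ hs₃ ⊢
  omega

/-- Columns are indexed by `ℕ` and read mod `k`, so that a run `x₀ + s` needs no wrap-around. -/
def IsNullCol (k l : ℕ) (I : Finset (Fin (2 * k))) (x : ℕ) : Prop :=
  ∀ i ∈ I, (l : ℤ) ≤ ((x : ℤ) - (i : ℕ)) % k

section

variable {k l : ℕ} {I : Finset (Fin (2 * k))}

lemma forall_banded_eq_false_iff (j : Fin k) :
    (∀ i ∈ I, banded k l i j = false) ↔ IsNullCol k l I j := by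
  simp [IsNullCol, banded]

lemma IsNullCol.congr {x y : ℕ} (h : x ≡ y [MOD k]) (hx : IsNullCol k l I x) :
    IsNullCol k l I y := fun i hi => by
  rw [← ((Int.natCast_modEq_iff.2 h).sub_right _).eq]
  exact hx i hi

lemma IsNullCol.exists_modEq_add {i₀ : Fin (2 * k)} {x : ℕ} (hk : 0 < k) (hi₀ : i₀ ∈ I)
    (hx : IsNullCol k l I x) : ∃ s < k - l, x ≡ i₀ + l + s [MOD k] := by
  have hd := hx i₀ hi₀
  have hlt := Int.emod_lt_of_pos ((x : ℤ) - (i₀ : ℕ)) (Int.natCast_pos.2 hk)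
  refine ⟨(((x : ℤ) - (i₀ : ℕ)) % k - l).toNat, by omega, ?_⟩
  rw [← Int.natCast_modEq_iff]
  have hcast : (((i₀ + l + (((x : ℤ) - (i₀ : ℕ)) % k - l).toNat : ℕ)) : ℤ) =
      (i₀ : ℕ) + ((x : ℤ) - (i₀ : ℕ)) % k := by push_cast; omega
  rw [hcast]
  calc (x : ℤ) = (i₀ : ℕ) + ((x : ℤ) - (i₀ : ℕ)) := by ring
    _ ≡ (i₀ : ℕ) + ((x : ℤ) - (i₀ : ℕ)) % k [ZMOD k] := ((Int.mod_modEq _ _).add_left _).symm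

lemma ordConnected_setOf_isNullCol (hkl : k ≤ 2 * l) (x₀ : ℕ) :
    {s | s < k - l ∧ IsNullCol k l I (x₀ + s)}.OrdConnected := by
  refine ⟨fun a ha c hc b ⟨hab, hbc⟩ => ⟨hbc.trans_lt hc.1, fun i hi => ?_⟩⟩
  have hshift (s : ℕ) : (((x₀ + s : ℕ) : ℤ) - (i : ℕ)) = ((x₀ : ℤ) - (i : ℕ)) + s := by
    push_cast; ring
  have ha' := ha.2 i hi
  have hc' := hc.2 i hi
  have hc_lt := hc.1
  rw [hshift] at ha' hc' ⊢
  exact le_emod_of_le_of_le (by omega) (Int.natCast_nonneg a) (by omega) (by omega) (by omega)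
    ha' hc'

end

lemma Nat.exists_eq_Ico_of_ordConnected {S : Set ℕ} (hS : S.OrdConnected) (hbdd : BddAbove S) :
    ∃ a r, S = Set.Ico a (a + r) := by
  rcases S.eq_empty_or_nonempty with rfl | hne
  · exact ⟨0, 0, by simp⟩
  have hIcc := (hne.ordConnected_iff_of_bdd (OrderBot.bddBelow S) hbdd).1 hS
  have hle := csInf_le_csSup hne (OrderBot.bddBelow S) hbdd
  refine ⟨sInf S, sSup S + 1 - sInf S, ?_⟩
  nth_rw 1 [hIcc]
  ext s
  simp only [Set.mem_Icc, Set.mem_Ico]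
  omega

lemma exists_forall_isNullCol_iff {k l : ℕ} (hkl : k ≤ 2 * l) (I : Finset (Fin (2 * k))) :
    ∃ c r : ℕ, ∀ j : Fin k, IsNullCol k l I j ↔ ∃ t < r, (j : ℕ) = (c + t) % k := by
  rcases I.eq_empty_or_nonempty with rfl | ⟨i₀, hi₀⟩
  · exact ⟨0, k, fun j => ⟨fun _ => ⟨j, j.isLt, by rw [zero_add, Nat.mod_eq_of_lt j.isLt]⟩,
      fun _ i hi => absurd hi (Finset.notMem_empty i)⟩⟩
  obtain ⟨a, r, hS⟩ := Nat.exists_eq_Ico_of_ordConnected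
    (ordConnected_setOf_isNullCol hkl (i₀ + l)) ⟨k - l, fun s hs => hs.1.le⟩
  refine ⟨i₀ + l + a, r, fun j => ⟨fun hj => ?_, fun ⟨t, ht, hjt⟩ => ?_⟩⟩
  · obtain ⟨s, hs, hjs⟩ := hj.exists_modEq_add j.pos hi₀
    obtain ⟨has, hsr⟩ : s ∈ Set.Ico a (a + r) := hS ▸ ⟨hs, hj.congr hjs⟩
    refine ⟨s - a, by omega, ?_⟩
    rw [← Nat.mod_eq_of_lt j.isLt, show i₀ + l + a + (s - a) = i₀ + l + s by omega]
    exact hjs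
  · have hmem : a + t ∈ Set.Ico a (a + r) := ⟨by omega, by omega⟩
    rw [← hS] at hmem
    refine hmem.2.congr ?_
    rw [hjt, ← add_assoc]
    exact Nat.mod_modEq _ _ |>.symm

theorem banded_null_columns_consecutive_general {k : ℕ}
    (I : Finset (Fin (2*k))) :
    ∃ c r : ℕ,
      Finset.univ.filter
        (fun j : Fin k => ∀ i ∈ I, banded k ((k + 1) / 2) i j = false) =
      Finset.univ.filter (fun j : Fin k => ∃ t < r, (j : ℕ) = (c + t) % k) := by
  obtain ⟨c, r, h⟩ := exists_forall_isNullCol_iff (l := (k + 1) / 2) (by omega) I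
  exact ⟨c, r, Finset.filter_congr fun j _ => (forall_banded_eq_false_iff j).trans (h j)⟩

theorem banded_null_columns_consecutive {k : ℕ} (hk : 3 ≤ k) (hodd : Odd k)
    (I : Finset (Fin (2*k))) (hI : I.card ≤ k)
    (hne : (Finset.univ.filter
      (fun j : Fin k => ∀ i ∈ I, banded k ((k + 1) / 2) i j = false)).Nonempty) :
    ∃ c r : ℕ,
      Finset.univ.filter
        (fun j : Fin k => ∀ i ∈ I, banded k ((k + 1) / 2) i j = false) =
      Finset.univ.filter (fun j : Fin k => ∃ t < r, (j : ℕ) = (c + t) % k) :=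
  banded_null_columns_consecutive_general I
end

section
/- Let k ≥ 4 be even, l = k/2, and M the augmented l-banded matrix of size 2(k−1)×k. The total number N of ones in M equals (k−1)(k+1) = k²−1, while the lower bound k(n−k+1) with n = 2(k−1) equals k(k−1); consequently N/(k(k−1)) = (k+1)/k → 1 as k → ∞. -/
/-- The augmented l-banded 2(k-1)×k matrix: the first k-1 columns form the
l-banded matrix modulo k-1, the last column has ones exactly in rows ≥ k-1. -/
def augBanded (k l : ℕ) (i : Fin (2*(k-1))) (j : Fin k) : Bool :=
  if (j : ℕ) < k - 1 then
    decide ((((j : ℕ) : ℤ) - ((i : ℕ) : ℤ)) % ((k : ℤ) - 1) < (l : ℤ))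
  else
    decide (k - 1 ≤ (i : ℕ))

open Finset Filter Topology

lemma card_filter_range_emod_sub (m : ℕ) (i : ℤ) (P : ℤ → Prop) [DecidablePred P] :
    #{j ∈ range m | P ((((j : ℕ) : ℤ) - i) % m)} = #{j ∈ range m | P (j : ℕ)} := by
  rcases Nat.eq_zero_or_pos m with rfl | hm
  · simp
  have hm' : (0 : ℤ) < m := by exact_mod_cast hm
  have emod_lt (x : ℤ) : (x % m).toNat < m := by
    have := Int.emod_lt_of_pos x hm'; omega
  have toNat_emod (x : ℤ) : ((x % m).toNat : ℤ) = x % m :=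
    Int.toNat_of_nonneg (Int.emod_nonneg _ hm'.ne')
  have emod_of_lt {j : ℕ} (hj : j < m) : (j : ℤ) % m = j :=
    Int.emod_eq_of_lt (by positivity) (by omega)
  apply card_nbij' (fun j : ℕ => (((j : ℤ) - i) % m).toNat)
    (fun r : ℕ => (((r : ℤ) + i) % m).toNat) <;>
  · intro _ _
    simp_all

lemma card_filter_range_emod_sub_lt {m l : ℕ} (i : ℤ) (hl : l ≤ m) :
    #{j ∈ range m | (((j : ℕ) : ℤ) - i) % m < l} = l := by
  rw [card_filter_range_emod_sub m i (· < (l : ℤ))]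
  simp only [Nat.cast_lt]
  rw [show {j ∈ range m | j < l} = range l by ext; simp only [mem_filter, mem_range]; omega,
    card_range]

lemma card_augBanded_row {k l : ℕ} (hl : l ≤ k - 1) (i : Fin (2 * (k - 1))) :
    #{j | augBanded k l i j = true} = l + if k - 1 ≤ (i : ℕ) then 1 else 0 := by
  obtain ⟨m, rfl⟩ : ∃ m, k = m + 1 := ⟨k - 1, by have := i.is_lt; omega⟩
  rw [Nat.add_sub_cancel] at hl
  rw [card_filter, Fin.sum_univ_castSucc]
  simp only [augBanded, Fin.val_castSucc, Fin.val_last, Nat.add_sub_cancel, Fin.is_lt, if_true,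
    lt_irrefl, if_false, Nat.cast_add, Nat.cast_one, add_sub_cancel_right, decide_eq_true_eq]
  rw [Fin.sum_univ_eq_sum_range
      (fun j => if (((j : ℕ) : ℤ) - (i : ℕ)) % m < l then 1 else 0) m,
    ← card_filter, card_filter_range_emod_sub_lt _ hl]

lemma card_augBanded {k l : ℕ} (hl : l ≤ k - 1) :
    #{p : Fin (2 * (k - 1)) × Fin k | augBanded k l p.1 p.2 = true} = (k - 1) * (2 * l + 1) := by
  have last_rows : #{i : Fin (2 * (k - 1)) | k - 1 ≤ (i : ℕ)} = k - 1 := by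
    have := card_filter_add_card_filter_not (s := univ)
      fun i : Fin (2 * (k - 1)) => (i : ℕ) < k - 1
    simp only [Fin.card_filter_val_lt, not_lt, card_univ, Fintype.card_fin] at this
    omega
  rw [card_filter, Fintype.sum_prod_type]
  simp only [← card_filter, card_augBanded_row hl, sum_add_distrib, sum_const, card_univ,
    Fintype.card_fin, smul_eq_mul, last_rows]
  ring

lemma tendsto_natCast_add_one_div_self :
    Tendsto (fun k : ℕ => ((k : ℝ) + 1) / k) atTop (𝓝 1) := by
  have h : Tendsto (fun k : ℕ => 1 + 1 / (k : ℝ)) atTop (𝓝 (1 + 0)) :=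
    tendsto_const_nhds.add tendsto_one_div_atTop_nhds_zero_nat
  rw [add_zero] at h
  refine h.congr' ?_
  filter_upwards [eventually_ne_atTop 0] with k hk
  field_simp

theorem augBanded_near_optimal :
    (∀ k : ℕ, 4 ≤ k → Even k →
      (Finset.univ.filter
          (fun p : Fin (2*(k-1)) × Fin k => augBanded k (k / 2) p.1 p.2 = true)).card
        = (k - 1) * (k + 1) ∧
      (k - 1) * (k + 1) = k ^ 2 - 1 ∧
      k * (2*(k-1) - k + 1) = k * (k - 1)) ∧
    Filter.Tendsto
      (fun k : ℕ => (((k - 1) * (k + 1) : ℕ) : ℝ) / ((k * (k - 1) : ℕ) : ℝ))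
      Filter.atTop (nhds 1) := by
  refine ⟨fun k hk hke => ⟨?_, ?_, ?_⟩, ?_⟩
  · rw [card_augBanded (by omega), Nat.two_mul_div_two_of_even hke]
  · rw [mul_comm, ← Nat.sq_sub_sq, one_pow]
  · rw [show 2 * (k - 1) - k + 1 = k - 1 by omega]
  · refine tendsto_natCast_add_one_div_self.congr' ?_
    filter_upwards [eventually_ge_atTop 2] with k hk
    have hk1 : (k : ℝ) - 1 ≠ 0 := by
      rw [sub_ne_zero]; exact_mod_cast (by omega : k ≠ 1)
    push_cast [Nat.cast_sub (by omega : 1 ≤ k)]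
    rw [mul_comm _ ((k : ℝ) + 1), mul_div_mul_right _ _ hk1]
end

section
/- Let k ≥ 3 be odd, l = (k+1)/2, and M the 2k×k l-banded matrix. For any m ∈ {1,…,k} and any m distinct rows of M, the number of non-null columns of the corresponding m×k submatrix is at least m. -/
/-!
Row `i` of the banded matrix covers the cyclic interval of `l` columns starting at `i mod k`, and
rows `i` and `i + k` coincide, so `m` rows have `s ≥ m / 2` distinct starting points. If some
column `q` is uncovered, cutting the cycle open just after `q` turns every band into an interval
of length `l` inside `[0, k)`; a union of such intervals with `s` distinct left ends has at least
`s + l - 1` points, and `s + l - 1 ≥ min (2 s) k ≥ m` because `2 l - 1 = k`.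
-/

open Finset

theorem card_add_le_card_biUnion_Ico {T : Finset ℤ} (hT : T.Nonempty) {l : ℕ} (hl : 0 < l) :
    #T + l ≤ #(T.biUnion fun t => Ico t (t + l)) + 1 := by
  set M := T.max' hT
  have hsub : T.erase M ∪ Ico M (M + l) ⊆ T.biUnion fun t => Ico t (t + l) := by
    intro x hx
    rcases mem_union.mp hx with hx | hx
    · exact mem_biUnion.mpr ⟨x, mem_of_mem_erase hx, mem_Ico.mpr ⟨le_rfl, by omega⟩⟩
    · exact mem_biUnion.mpr ⟨M, max'_mem T hT, hx⟩
  have hdisj : Disjoint (T.erase M) (Ico M (M + l)) := by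
    refine disjoint_left.mpr fun x hx hx' => ?_
    have := T.le_max' x (mem_of_mem_erase hx)
    have := ne_of_mem_erase hx
    have := (mem_Ico.mp hx').1
    omega
  have := card_le_card hsub
  rw [card_union_of_disjoint hdisj, card_erase_of_mem (max'_mem T hT), Int.card_Ico,
    add_sub_cancel_left, Int.toNat_natCast] at this
  have : 0 < #T := hT.card_pos
  omega

theorem card_le_mul_card_image_of_modEq {m k : ℕ} {β : Type*} [DecidableEq β]
    (I : Finset (Fin (m * k))) (f : Fin (m * k) → β)
    (hf : ∀ i j, f i = f j → (i : ℕ) ≡ j [MOD k]) : #I ≤ m * #(I.image f) := by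
  refine card_le_mul_card_image I m fun b _ => ?_
  calc #{i ∈ I | f i = b} ≤ #(range m) := card_le_card_of_injOn (fun i => (i : ℕ) / k) ?_ ?_
    _ = m := card_range m
  · intro i _
    have := i.isLt
    have hk : 0 < k := Nat.pos_of_ne_zero (by rintro rfl; simp at this)
    simp [Nat.div_lt_iff_lt_mul hk, this]
  · intro i hi j hj (hdiv : (i : ℕ) / k = j / k)
    simp only [coe_filter, Set.mem_ofPred_eq] at hi hj
    have hmod : (i : ℕ) % k = j % k := hf i j (hi.2.trans hj.2.symm)
    exact Fin.ext (by rw [← Nat.div_add_mod i k, ← Nat.div_add_mod j k, hmod, hdiv])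

theorem Int.emod_sub_add_lt_of_le_emod {k x q l : ℤ} (hk : 0 < k) (h : l ≤ (q - x) % k) :
    (x - (q + 1)) % k + l < k := by
  have hmod : k - 1 - (q - x) % k ≡ x - (q + 1) [ZMOD k] :=
    calc k - 1 - (q - x) % k ≡ k - 1 - (q - x) [ZMOD k] := (Int.mod_modEq _ _).sub_left _
      _ = x - (q + 1) + k := by ring
      _ ≡ x - (q + 1) [ZMOD k] := Int.add_modulus_modEq_iff.mpr rfl
  have h0 := Int.emod_nonneg (q - x) hk.ne'
  have h1 := Int.emod_lt_of_pos (q - x) hk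
  rw [← hmod.eq, Int.emod_eq_of_lt (by omega) (by omega)]
  omega

theorem exists_fin_emod_sub_eq {k : ℕ} (hk : 0 < k) {x c u : ℤ} (hu : 0 ≤ u)
    (hlt : (x - c) % k + u < k) :
    ∃ j : Fin k, ((j : ℤ) - x) % k = u ∧ ((j : ℤ) - c) % k = (x - c) % k + u := by
  have h0 := Int.emod_nonneg (x + u) (by omega : (k : ℤ) ≠ 0)
  have h1 := Int.emod_lt_of_pos (x + u) (by omega : (0 : ℤ) < k)
  have h2 := Int.emod_nonneg (x - c) (by omega : (k : ℤ) ≠ 0)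
  refine ⟨⟨((x + u) % k).toNat, by omega⟩, ?_, ?_⟩
  · rw [Int.toNat_of_nonneg h0, ((Int.mod_modEq (x + u) k).sub_right x).eq, add_sub_cancel_left,
      Int.emod_eq_of_lt hu (by omega)]
  · have hmod : (x + u) % k - c ≡ (x - c) % k + u [ZMOD k] :=
      calc (x + u) % k - c ≡ x + u - c [ZMOD k] := (Int.mod_modEq _ _).sub_right c
        _ = x - c + u := by ring
        _ ≡ (x - c) % k + u [ZMOD k] := ((Int.mod_modEq _ _).add_right u).symm
    rw [Int.toNat_of_nonneg h0, hmod.eq, Int.emod_eq_of_lt (by omega) hlt]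

/-- The residue of `x` modulo `k`, read on the cycle `ℤ/k` cut open just after `q`. -/
def cutOffset (k q x : ℕ) : ℤ := ((x : ℤ) - (q + 1)) % k

theorem Nat.modEq_of_cutOffset_eq {k q x y : ℕ} (h : cutOffset k q x = cutOffset k q y) :
    x ≡ y [MOD k] :=
  Int.natCast_modEq_iff.mp (by simpa using Int.ModEq.add_right ((q : ℤ) + 1) h)

theorem cutOffset_injective (k q : ℕ) : Function.Injective fun j : Fin k => cutOffset k q j :=
  fun j j' h => Fin.ext ((Nat.modEq_of_cutOffset_eq h).eq_of_lt_of_lt j.isLt j'.isLt)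

theorem exists_banded_cutOffset_eq {k l : ℕ} {i : Fin (2 * k)} {q : Fin k}
    (hiq : banded k l i q = false) {v : ℤ}
    (hv : v ∈ Ico (cutOffset k q i) (cutOffset k q i + l)) :
    ∃ j : Fin k, banded k l i j = true ∧ cutOffset k q j = v := by
  have hk : 0 < k := Fin.pos q
  obtain ⟨hv0, hv1⟩ := mem_Ico.mp hv
  have hqi : (l : ℤ) ≤ ((q : ℕ) - (i : ℕ) : ℤ) % k := by
    simpa [banded] using hiq
  have hend : cutOffset k q i + l < k := Int.emod_sub_add_lt_of_le_emod (by omega) hqi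
  obtain ⟨j, hji, hjq⟩ := exists_fin_emod_sub_eq hk (x := i) (c := q + 1)
    (u := v - cutOffset k q i) (by omega) (by change cutOffset k q i + _ < k; omega)
  refine ⟨j, decide_eq_true ?_, hjq.trans (add_sub_cancel _ v)⟩
  rw [hji]
  omega

theorem banded_hall_condition_general {k : ℕ} (hodd : Odd k)
    (I : Finset (Fin (2*k))) (hI1 : 1 ≤ I.card) (hIk : I.card ≤ k) :
    I.card ≤ (Finset.univ.filter
      (fun j : Fin k => ∃ i ∈ I, banded k ((k + 1) / 2) i j = true)).card := by
  set l := (k + 1) / 2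
  set J := univ.filter fun j : Fin k => ∃ i ∈ I, banded k l i j = true
  by_cases hJ : J = univ
  · simpa [hJ] using hIk
  obtain ⟨q, -, hq⟩ := exists_of_ssubset (ssubset_univ_iff.mpr hJ)
  set T := I.image fun i : Fin (2 * k) => cutOffset k q i
  have hrows : #I ≤ 2 * #T :=
    card_le_mul_card_image_of_modEq I _ fun _ _ => Nat.modEq_of_cutOffset_eq
  have hcols : #(J.image fun j : Fin k => cutOffset k q j) = #J :=
    card_image_of_injective _ (cutOffset_injective k q)
  have hcover : T.biUnion (fun t => Ico t (t + l)) ⊆ J.image fun j : Fin k => cutOffset k q j := by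
    intro v hv
    obtain ⟨_, hiT, hv⟩ := mem_biUnion.mp hv
    obtain ⟨i, hi, rfl⟩ := mem_image.mp hiT
    have hiq : banded k l i q = false :=
      eq_false_of_ne_true fun h => hq (mem_filter.mpr ⟨mem_univ q, i, hi, h⟩)
    obtain ⟨j, hij, rfl⟩ := exists_banded_cutOffset_eq hiq hv
    exact mem_image_of_mem _ (mem_filter.mpr ⟨mem_univ j, i, hi, hij⟩)
  have hT : T.Nonempty := (card_pos.mp (by omega)).image _
  have hunion := card_add_le_card_biUnion_Ico hT (l := l) (by omega)
  have hcard := card_le_card hcover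
  obtain ⟨t, rfl⟩ := hodd
  omega

theorem banded_hall_condition {k : ℕ} (hk : 3 ≤ k) (hodd : Odd k)
    (I : Finset (Fin (2*k))) (hI1 : 1 ≤ I.card) (hIk : I.card ≤ k) :
    I.card ≤ (Finset.univ.filter
      (fun j : Fin k => ∃ i ∈ I, banded k ((k + 1) / 2) i j = true)).card :=
  banded_hall_condition_general hodd I hI1 hIk
end
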